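/- Let G be the complete graph on q ≥ 2 vertices with pairwise distinct positive edge weights, and let T be its (unique) maximum spanning tree. Then an edge weight w_ij is a jump point of the first Betti curve ε ↦ β₁(ε) (i.e., a death value of a cycle in the graph filtration) if and only if the edge {i,j} does not belong to T. Consequently the death set D has exactly (q−1)(q−2)/2 elements. -/

import Mathlib

/-- The threshold graph of a weighted graph `H`: keep only edges of `H` whose
weight strictly exceeds `ε`. -/
def thresholdOf {q : ℕ} (H : SimpleGraph (Fin q)) (w : Sym2 (Fin q) → ℝ) (ε : ℝ) :
    SimpleGraph (Fin q) where
  Adj i j := H.Adj i j ∧ ε < w s(i, j)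
  symm := ⟨fun i j h => ⟨h.1.symm, by rw [Sym2.eq_swap]; exact h.2⟩⟩
  loopless := ⟨fun i h => H.loopless.irrefl i h.1⟩

/-- The threshold graph of the complete weighted graph on `Fin q`. -/
def thresholdGraph {q : ℕ} (w : Sym2 (Fin q) → ℝ) (ε : ℝ) : SimpleGraph (Fin q) :=
  thresholdOf ⊤ w ε

/-- `β₀(ε)`: the number of connected components of the threshold graph. -/
noncomputable def betti0 {q : ℕ} (w : Sym2 (Fin q) → ℝ) (ε : ℝ) : ℕ :=
  Nat.card (thresholdGraph w ε).ConnectedComponent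

/-- `E(ε)`: the number of edges of the threshold graph. -/
noncomputable def numEdges {q : ℕ} (w : Sym2 (Fin q) → ℝ) (ε : ℝ) : ℕ :=
  (thresholdGraph w ε).edgeSet.ncard

/-- `β₁(ε) = E(ε) − q + β₀(ε)`: the cycle rank of the threshold graph. -/
noncomputable def betti1 {q : ℕ} (w : Sym2 (Fin q) → ℝ) (ε : ℝ) : ℤ :=
  (numEdges w ε : ℤ) - (q : ℤ) + (betti0 w ε : ℤ)

/-- A point `ε` is a jump point of `f` if `f` is not constant on any
neighborhood of `ε`. -/
def IsJump {β : Type*} (f : ℝ → β) (ε : ℝ) : Prop :=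
  ∀ δ > 0, ∃ x : ℝ, |x - ε| < δ ∧ f x ≠ f ε

/-- `T` is a maximum spanning tree of `G` w.r.t. the weights `w`: a spanning tree
of `G` whose total edge weight is maximal among all spanning trees of `G`. -/
def IsMaxSpanningTree {V : Type*} (G : SimpleGraph V) (w : Sym2 V → ℝ)
    (T : SimpleGraph V) : Prop :=
  T ≤ G ∧ T.IsTree ∧
    ∀ T' : SimpleGraph V, T' ≤ G → T'.IsTree →
      (∑ᶠ e ∈ T'.edgeSet, w e) ≤ ∑ᶠ e ∈ T.edgeSet, w e

/-! By the cycle property of maximum spanning trees, an edge of weight above `ε` joins two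
vertices that are already joined by tree edges of weight above `ε`: otherwise the tree path
between its ends contains an edge of weight at most `ε`, and exchanging the two gives a heavier
spanning tree. Hence the threshold graph `G_ε` has the same components as the forest `T_ε` of
tree edges above `ε`, and since a forest satisfies `β₀ + E = q`, `β₁(ε)` counts the non-tree
edges of weight above `ε`. This step function jumps exactly at the non-tree weights, of which
there are `C(q, 2) - (q - 1)`. -/

theorem finsum_mem_insert_sdiff_singleton {α M : Type*} [AddCommGroup M] (f : α → M)
    {s : Set α} (hs : s.Finite) {a b : α} (ha : a ∈ s) (hb : b ∉ s \ {a}) :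
    ∑ᶠ i ∈ insert b (s \ {a}), f i = ∑ᶠ i ∈ s, f i - f a + f b := by
  have hs' := finsum_mem_insert f (fun h ↦ h.2 rfl : a ∉ s \ {a}) hs.sdiff
  rw [Set.insert_sdiff_singleton, Set.insert_eq_of_mem ha] at hs'
  rw [finsum_mem_insert f hb hs.sdiff, hs']
  abel

namespace SimpleGraph

variable {V : Type*} {G : SimpleGraph V}

lemma Reachable.deleteEdges_singleton_cases {x y a b : V} (h : G.Reachable a b) :
    (G.deleteEdges {s(x, y)}).Reachable a b ∨
      (G.deleteEdges {s(x, y)}).Reachable a x ∧ (G.deleteEdges {s(x, y)}).Reachable y b ∨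
      (G.deleteEdges {s(x, y)}).Reachable a y ∧ (G.deleteEdges {s(x, y)}).Reachable x b := by
  obtain ⟨p⟩ := h
  induction p with
  | nil => exact .inl .rfl
  | @cons u m _ hadj _ ih =>
    by_cases he : s(u, m) = s(x, y)
    · rcases Sym2.eq_iff.mp he with ⟨rfl, rfl⟩ | ⟨rfl, rfl⟩ <;>
        rcases ih with h | ⟨h₁, h₂⟩ | ⟨h₁, h₂⟩ <;>
        grind [Reachable.refl, Reachable.trans, Reachable.symm]
    · have hadj' : (G.deleteEdges {s(x, y)}).Adj u m := by simp [hadj, he]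
      rcases ih with h | ⟨h₁, h₂⟩ | ⟨h₁, h₂⟩
      · exact .inl (hadj'.reachable.trans h)
      · exact .inr (.inl ⟨hadj'.reachable.trans h₁, h₂⟩)
      · exact .inr (.inr ⟨hadj'.reachable.trans h₁, h₂⟩)

lemma card_connectedComponent_bot :
    Nat.card (⊥ : SimpleGraph V).ConnectedComponent = Nat.card V :=
  (Nat.card_eq_of_bijective _ ⟨fun _ _ h ↦ reachable_bot.mp (ConnectedComponent.exact h),
    Quot.mk_surjective⟩).symm

lemma card_connectedComponent_deleteEdges_of_isBridge [Finite V] {x y : V} (hadj : G.Adj x y)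
    (hb : G.IsBridge s(x, y)) :
    Nat.card (G.deleteEdges {s(x, y)}).ConnectedComponent = Nat.card G.ConnectedComponent + 1 := by
  set G' := G.deleteEdges {s(x, y)}
  set φ := ConnectedComponent.map (Hom.ofLE (deleteEdges_le {s(x, y)}) : G' →g G)
  have hxy : G'.connectedComponentMk x ≠ G'.connectedComponentMk y :=
    fun h ↦ hb (ConnectedComponent.exact h)
  -- `φ` glues the two sides `[x]` and `[y]` of the bridge and nothing else.
  have hinj : Set.InjOn φ {G'.connectedComponentMk y}ᶜ := by
    rintro ⟨a⟩ ha ⟨b⟩ hb' hab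
    replace ha : ¬G'.Reachable a y := fun h ↦ ha (ConnectedComponent.sound h)
    replace hb' : ¬G'.Reachable b y := fun h ↦ hb' (ConnectedComponent.sound h)
    rcases (ConnectedComponent.exact hab).deleteEdges_singleton_cases (x := x) (y := y) with
      h | ⟨-, h⟩ | ⟨h, -⟩
    · exact ConnectedComponent.sound h
    · exact absurd h.symm hb'
    · exact absurd h ha
  have himage : φ '' {G'.connectedComponentMk y}ᶜ = Set.univ := by
    refine Set.eq_univ_of_forall fun c ↦ ?_
    obtain ⟨a, rfl⟩ := ConnectedComponent.surjective_map_ofLE (deleteEdges_le {s(x, y)}) c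
    by_cases ha : a = G'.connectedComponentMk y
    · refine ⟨G'.connectedComponentMk x, hxy, ?_⟩
      rw [ha]
      exact ConnectedComponent.sound hadj.reachable
    · exact ⟨a, ha, rfl⟩
  have := Set.ncard_compl_add_ncard {G'.connectedComponentMk y}
  rw [← hinj.ncard_image, himage, Set.ncard_univ, Set.ncard_singleton] at this
  exact this.symm

theorem IsAcyclic.card_connectedComponent_add_ncard_edgeSet [Finite V] (hG : G.IsAcyclic) :
    Nat.card G.ConnectedComponent + G.edgeSet.ncard = Nat.card V := by
  induction hn : G.edgeSet.ncard generalizing G with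
  | zero =>
    rw [edgeSet_eq_empty.mp ((Set.ncard_eq_zero).mp hn), card_connectedComponent_bot, add_zero]
  | succ n ih =>
    obtain ⟨e, he⟩ := Set.nonempty_of_ncard_ne_zero (by rw [hn]; omega)
    induction e using Sym2.ind with | _ x y
    have hcard : (G.deleteEdges {s(x, y)}).edgeSet.ncard = n := by
      rw [edgeSet_deleteEdges, Set.ncard_sdiff_singleton_of_mem he, hn, Nat.add_sub_cancel]
    have := ih (hG.anti (deleteEdges_le _)) hcard
    rw [card_connectedComponent_deleteEdges_of_isBridge he
      (isAcyclic_iff_forall_isBridge.mp hG he)] at this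
    omega

lemma connected_iff_card_connectedComponent_eq_one :
    G.Connected ↔ Nat.card G.ConnectedComponent = 1 := by
  rw [Nat.card_eq_one_iff_unique, connected_iff]
  refine ⟨fun ⟨hpre, hne⟩ ↦ ⟨hpre.subsingleton_connectedComponent, hne.map G.connectedComponentMk⟩,
    fun ⟨hsub, ⟨c⟩⟩ ↦ ⟨fun u v ↦ ConnectedComponent.exact (Subsingleton.elim _ _), ?_⟩⟩
  exact ⟨c.exists_rep.choose⟩

lemma IsAcyclic.not_reachable_deleteEdges_of_mem_edges (hG : G.IsAcyclic) {x y : V}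
    {p : G.Walk x y} (hp : p.IsPath) {e : Sym2 V} (he : e ∈ p.edges) :
    ¬(G.deleteEdges {e}).Reachable x y := by
  classical
  rintro ⟨q⟩
  let r : G.Walk x y := q.mapLe (deleteEdges_le _)
  have hpr : p = r.toPath := congrArg Subtype.val ((hG.subsingleton_path x y).elim ⟨p, hp⟩ r.toPath)
  have her : e ∈ q.edges := by simpa [r] using r.edges_toPath_subset_edges (hpr ▸ he)
  simpa using q.edges_subset_edgeSet her

lemma edgeSet_deleteEdges_sup_edge {s : Set (Sym2 V)} {x y : V} (hxy : x ≠ y) :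
    (G.deleteEdges s ⊔ edge x y).edgeSet = insert s(x, y) (G.edgeSet \ s) := by
  rw [edgeSet_sup, edgeSet_deleteEdges, edgeSet_edge_of_ne hxy, Set.union_singleton]

lemma mk_notMem_edgeSet_sdiff_of_not_reachable {s : Set (Sym2 V)} {x y : V}
    (h : ¬(G.deleteEdges s).Reachable x y) : s(x, y) ∉ G.edgeSet \ s := fun hxy ↦
  h (Adj.reachable (by rwa [← mem_edgeSet, edgeSet_deleteEdges]))

theorem IsTree.sup_edge_deleteEdges [Finite V] {T : SimpleGraph V} (hT : T.IsTree)
    {e : Sym2 V} (he : e ∈ T.edgeSet) {x y : V} (hsep : ¬(T.deleteEdges {e}).Reachable x y) :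
    (T.deleteEdges {e} ⊔ edge x y).IsTree := by
  have hxy : x ≠ y := by rintro rfl; exact hsep .rfl
  have hnew := mk_notMem_edgeSet_sdiff_of_not_reachable hsep
  have hacyc := (hT.isAcyclic.anti (deleteEdges_le {e})).sup_edge_of_not_reachable hsep
  have hcard : (T.deleteEdges {e} ⊔ edge x y).edgeSet.ncard = T.edgeSet.ncard := by
    rw [edgeSet_deleteEdges_sup_edge hxy, Set.ncard_insert_of_notMem hnew,
      Set.ncard_sdiff_singleton_of_mem he]
    have := (Set.ncard_pos (Set.toFinite _)).mpr ⟨e, he⟩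
    omega
  refine ⟨connected_iff_card_connectedComponent_eq_one.mpr ?_, hacyc⟩
  have h₁ := hacyc.card_connectedComponent_add_ncard_edgeSet
  have h₂ := hT.isAcyclic.card_connectedComponent_add_ncard_edgeSet
  rw [connected_iff_card_connectedComponent_eq_one.mp hT.connected] at h₂
  omega

end SimpleGraph

open SimpleGraph

theorem IsMaxSpanningTree.reachable_deleteEdges_of_lt {V : Type*} [Finite V]
    {G T : SimpleGraph V} {w : Sym2 V → ℝ} (hT : IsMaxSpanningTree G w T) {x y : V}
    (hxy : G.Adj x y) {ε : ℝ} (hε : ε < w s(x, y)) :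
    (T.deleteEdges {e | w e ≤ ε}).Reachable x y := by
  obtain ⟨hTG, hT, hmax⟩ := hT
  by_contra h
  obtain ⟨p, hp⟩ := (hT.connected.preconnected x y).exists_isPath
  obtain ⟨f, hfε : w f ≤ ε, hfp⟩ := p.exists_mem_edges_of_not_reachable_deleteEdges h
  have hf := p.edges_subset_edgeSet hfp
  have hsep := hT.isAcyclic.not_reachable_deleteEdges_of_mem_edges hp hfp
  have hle : T.deleteEdges {f} ⊔ edge x y ≤ G :=
    sup_le ((deleteEdges_le _).trans hTG) ((edge_le_iff (G := G)).mpr (.inr hxy))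
  have hw := hmax _ hle (hT.sup_edge_deleteEdges hf hsep)
  rw [edgeSet_deleteEdges_sup_edge hxy.ne, finsum_mem_insert_sdiff_singleton w (Set.toFinite _)
    hf (mk_notMem_edgeSet_sdiff_of_not_reachable hsep)] at hw
  linarith

section Threshold

variable {q : ℕ} {w : Sym2 (Fin q) → ℝ}

lemma thresholdOf_eq_deleteEdges (H : SimpleGraph (Fin q)) (ε : ℝ) :
    thresholdOf H w ε = H.deleteEdges {e | w e ≤ ε} := by
  ext i j
  simp [thresholdOf]

lemma edgeSet_thresholdOf (H : SimpleGraph (Fin q)) (ε : ℝ) :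
    (thresholdOf H w ε).edgeSet = {e ∈ H.edgeSet | ε < w e} := by
  ext e
  simp [thresholdOf_eq_deleteEdges, edgeSet_deleteEdges]

theorem betti1_eq_ncard {T : SimpleGraph (Fin q)} (hT : IsMaxSpanningTree ⊤ w T) (ε : ℝ) :
    betti1 w ε = ({e ∈ (⊤ : SimpleGraph (Fin q)).edgeSet \ T.edgeSet | ε < w e}.ncard : ℤ) := by
  have hreach : (thresholdGraph w ε).Reachable = (thresholdOf T w ε).Reachable := by
    refine le_antisymm ?_ (Reachable.mono' fun u v h ↦ ⟨hT.1 h.1, h.2⟩)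
    rw [reachable_eq_reflTransGen, reachable_eq_reflTransGen]
    refine Relation.reflTransGen_closed fun u v h ↦ ?_
    rw [← reachable_iff_reflTransGen, thresholdOf_eq_deleteEdges]
    exact hT.reachable_deleteEdges_of_lt h.1 h.2
  have hβ₀ : betti0 w ε = Nat.card (thresholdOf T w ε).ConnectedComponent := by
    simp only [betti0, ConnectedComponent, hreach]
  have hforest := (hT.2.1.isAcyclic.anti fun _ _ h ↦ h.1 : (thresholdOf T w ε).IsAcyclic)
    |>.card_connectedComponent_add_ncard_edgeSet
  have hE : numEdges w ε = (thresholdOf T w ε).edgeSet.ncard +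
      {e ∈ (⊤ : SimpleGraph (Fin q)).edgeSet \ T.edgeSet | ε < w e}.ncard := by
    have hsub := edgeSet_mono hT.1
    rw [numEdges, thresholdGraph, ← Set.ncard_inter_add_ncard_sdiff_eq_ncard _ T.edgeSet,
      edgeSet_thresholdOf, edgeSet_thresholdOf]
    congr 2 <;> ext e <;> grind
  rw [Nat.card_fin] at hforest
  rw [betti1, hβ₀, hE]
  push_cast
  omega

end Threshold

section Jumps

open Filter Topology

lemma isJump_iff_not_eventually_eq {β : Type*} (f : ℝ → β) (ε : ℝ) :
    IsJump f ε ↔ ¬∀ᶠ x in 𝓝 ε, f x = f ε := by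
  simp only [IsJump, Metric.eventually_nhds_iff, Real.dist_eq]
  push Not
  rfl

lemma isJump_comp_iff {β γ : Type*} {g : β → γ} (hg : g.Injective) (f : ℝ → β) (ε : ℝ) :
    IsJump (g ∘ f) ε ↔ IsJump f ε := by
  simp only [IsJump, Function.comp, hg.ne_iff]

theorem isJump_ncard_lt_iff {α : Type*} {S : Set α} (hS : S.Finite) (w : α → ℝ) (ε : ℝ) :
    IsJump (fun x ↦ {e ∈ S | x < w e}.ncard) ε ↔ ε ∈ w '' S := by
  rw [isJump_iff_not_eventually_eq]
  constructor
  · contrapose!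
    intro hε
    have hloc : ∀ᶠ x in 𝓝 ε, ∀ e ∈ S, (x < w e ↔ ε < w e) := by
      refine (eventually_all_finite hS).mpr fun e he ↦ ?_
      have hne : w e ≠ ε := fun h ↦ hε ⟨e, he, h⟩
      rcases hne.lt_or_gt with h | h
      · exact (eventually_gt_nhds h).mono fun x hx ↦ iff_of_false hx.not_gt h.not_gt
      · exact (eventually_lt_nhds h).mono fun x hx ↦ iff_of_true hx h
    filter_upwards [hloc] with x hx
    congr 1
    ext e
    exact and_congr_right (hx e)
  · rintro ⟨e, he, rfl⟩ h
    obtain ⟨x, hx, hxe : x < w e⟩ :=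
      ((h.filter_mono nhdsWithin_le_nhds).and (self_mem_nhdsWithin (s := Set.Iio (w e)))).exists
    have hlt : {e' ∈ S | w e < w e'} ⊂ {e' ∈ S | x < w e'} :=
      Set.ssubset_iff_subset_ne.mpr ⟨fun e' h' ↦ ⟨h'.1, hxe.trans h'.2⟩,
        fun heq ↦ lt_irrefl (w e) (heq ▸ ⟨he, hxe⟩ : e ∈ {e' ∈ S | w e < w e'}).2⟩
    exact (Set.ncard_lt_ncard hlt (hS.subset fun _ h ↦ h.1)).ne' hx

end Jumps

theorem isJump_betti1_iff {q : ℕ} {w : Sym2 (Fin q) → ℝ} {T : SimpleGraph (Fin q)}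
    (hT : IsMaxSpanningTree ⊤ w T) (ε : ℝ) :
    IsJump (betti1 w) ε ↔ ε ∈ w '' ((⊤ : SimpleGraph (Fin q)).edgeSet \ T.edgeSet) := by
  rw [show betti1 w = _ from funext (betti1_eq_ncard hT), ← Function.comp_def,
    isJump_comp_iff Nat.cast_injective, isJump_ncard_lt_iff (Set.toFinite _)]

lemma choose_two_sub_sub_one (n : ℕ) : n.choose 2 - (n - 1) = (n - 1) * (n - 2) / 2 := by
  cases n with
  | zero => rfl
  | succ m =>
    rw [Nat.choose_succ_succ', Nat.choose_one_right, Nat.add_sub_cancel, Nat.add_sub_cancel_left,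
      Nat.choose_two_right]
    rfl

lemma ncard_edgeSet_top_sdiff_of_isTree {n : ℕ} {T : SimpleGraph (Fin n)} (hT : T.IsTree) :
    ((⊤ : SimpleGraph (Fin n)).edgeSet \ T.edgeSet).ncard = (n - 1) * (n - 2) / 2 := by
  have hT' := (isTree_iff_connected_and_card.mp hT).2
  rw [Nat.card_coe_set_eq, Nat.card_fin] at hT'
  rw [Set.ncard_sdiff (edgeSet_mono le_top), ← coe_edgeFinset, Set.ncard_coe_finset,
    card_edgeFinset_top_eq_card_choose_two, Fintype.card_fin, ← choose_two_sub_sub_one]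
  congr
  omega

theorem death_set_eq_non_mst_general (q : ℕ) (w : Sym2 (Fin q) → ℝ)
    (hinj : ∀ e f : Sym2 (Fin q), ¬ e.IsDiag → ¬ f.IsDiag → w e = w f → e = f)
    (T : SimpleGraph (Fin q)) (hT : IsMaxSpanningTree ⊤ w T) :
    (∀ i j : Fin q, i ≠ j →
      (IsJump (betti1 w) (w s(i, j)) ↔ s(i, j) ∉ T.edgeSet)) ∧
    {ε : ℝ | IsJump (betti1 w) ε}.ncard = (q - 1) * (q - 2) / 2 := by
  have hinjOn : Set.InjOn w (⊤ : SimpleGraph (Fin q)).edgeSet := fun e he f hf ↦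
    hinj e f (not_isDiag_of_mem_edgeSet _ he) (not_isDiag_of_mem_edgeSet _ hf)
  refine ⟨fun i j hij ↦ ?_, ?_⟩
  · have hij' : s(i, j) ∈ (⊤ : SimpleGraph (Fin q)).edgeSet := by simpa using hij
    rw [isJump_betti1_iff hT, hinjOn.mem_image_iff Set.sdiff_subset hij', Set.mem_sdiff,
      and_iff_right hij']
  · have hD : {ε | IsJump (betti1 w) ε} = w '' ((⊤ : SimpleGraph (Fin q)).edgeSet \ T.edgeSet) :=
      Set.ext (isJump_betti1_iff hT)
    rw [hD, (hinjOn.mono Set.sdiff_subset).ncard_image,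
      ncard_edgeSet_top_sdiff_of_isTree hT.2.1]

/-- **Death values are the non-tree edge weights.** For the complete graph on
`q ≥ 2` vertices with pairwise distinct positive edge weights and maximum spanning
tree `T`, an edge weight `w s(i,j)` is a jump point of the Betti-1 curve iff the
edge `{i,j}` does not lie in `T`; consequently the death set has exactly
`(q−1)(q−2)/2` elements. -/
theorem death_set_eq_non_mst (q : ℕ) (hq : 2 ≤ q) (w : Sym2 (Fin q) → ℝ)
    (hpos : ∀ e : Sym2 (Fin q), ¬ e.IsDiag → 0 < w e)
    (hinj : ∀ e f : Sym2 (Fin q), ¬ e.IsDiag → ¬ f.IsDiag → w e = w f → e = f)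
    (T : SimpleGraph (Fin q)) (hT : IsMaxSpanningTree ⊤ w T) :
    (∀ i j : Fin q, i ≠ j →
      (IsJump (betti1 w) (w s(i, j)) ↔ s(i, j) ∉ T.edgeSet)) ∧
    {ε : ℝ | IsJump (betti1 w) ε}.ncard = (q - 1) * (q - 2) / 2 :=
  death_set_eq_non_mst_general q w hinj T hT
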